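/- arXiv:1601.00611 — 2 statements merged into one kernel-verified Lean document; each statement's English description precedes it below -/
import Mathlib

section
/- With Q an 𝔪_ξ-primary ideal, B = {(x−ξ)^{α₀},…,(x−ξ)^{α_{δ−1}}} a basis of ℂ[x]/Q with dual basis Λ₀,…,Λ_{δ−1}, and M the tuple of multiplication matrices by (xᵢ−ξᵢ) in the basis B: for every q ∈ ℂ[x], the normal form of q modulo Q equals q(ξ+M)(1), where q(ξ+M) = Σ_γ (1/γ!)∂_ξ^γ(q)·M^γ, and moreover q(ξ+M)(1) = Σ_{i=0}^{δ−1} Λᵢ(q)·(x−ξ)^{αᵢ}. -/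
open MvPolynomial

noncomputable section

/-- Iterated partial derivative operator `∂^β` on polynomials. -/
def pdiff {n : ℕ} {K : Type} [CommSemiring K] (β : Fin n →₀ ℕ) :
    Module.End K (MvPolynomial (Fin n) K) :=
  (List.ofFn fun i : Fin n =>
    ((MvPolynomial.pderiv i : Derivation K _ _).toLinearMap ^ (β i))).prod

/-- Action of a polynomial differential operator at the point ξ:
`Λ = Σ_β c_β ∂^β ↦ (p ↦ Σ_β c_β (∂^β p)(ξ))`. -/
def dapply {n : ℕ} (ξ : Fin n → ℂ) (Λ : (Fin n →₀ ℕ) →₀ ℂ)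
    (p : MvPolynomial (Fin n) ℂ) : ℂ :=
  Λ.sum fun β c => c * eval ξ (pdiff β p)

def dapplyL {n : ℕ} (ξ : Fin n → ℂ) (p : MvPolynomial (Fin n) ℂ) :
    ((Fin n →₀ ℕ) →₀ ℂ) →ₗ[ℂ] ℂ where
  toFun Λ := dapply ξ Λ p
  map_add' a b := Finsupp.sum_add_index' (fun β => zero_mul _)
    (fun β c d => add_mul c d _)
  map_smul' c a := by
    classical
    simp only [RingHom.id_apply, smul_eq_mul, dapply]
    rw [Finsupp.sum_smul_index fun β => zero_mul ((eval ξ) ((pdiff β) p)), Finsupp.mul_sum]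
    exact Finsupp.sum_congr fun β _ => mul_assoc _ _ _

/-- The space `I^⊥ ∩ ℂ[∂_ξ]` of polynomial differential operators at ξ
annihilating the ideal `I`. -/
def dualSpace {n : ℕ} (I : Ideal (MvPolynomial (Fin n) ℂ)) (ξ : Fin n → ℂ) :
    Submodule ℂ ((Fin n →₀ ℕ) →₀ ℂ) :=
  ⨅ p ∈ I, LinearMap.ker (dapplyL ξ p)

lemma mem_dualSpace {n : ℕ} {I : Ideal (MvPolynomial (Fin n) ℂ)} {ξ : Fin n → ℂ}
    {Λ : (Fin n →₀ ℕ) →₀ ℂ} : Λ ∈ dualSpace I ξ ↔ ∀ p ∈ I, dapply ξ Λ p = 0 := by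
  simp only [dualSpace, Submodule.mem_iInf, LinearMap.mem_ker]
  rfl

/-- The multiplicity of ξ as a root of I. -/
def mult {n : ℕ} (I : Ideal (MvPolynomial (Fin n) ℂ)) (ξ : Fin n → ℂ) : ℕ :=
  Module.finrank ℂ (dualSpace I ξ)

/-- Order (total degree in the ∂ variables) of a polynomial differential operator. -/
def ordD {n : ℕ} (Λ : (Fin n →₀ ℕ) →₀ ℂ) : ℕ :=
  Λ.support.sup fun β => β.sum fun _ k => k

/-- The nil-index of I at ξ: maximal order of elements of the dual space. -/
def nilIndex {n : ℕ} (I : Ideal (MvPolynomial (Fin n) ℂ)) (ξ : Fin n → ℂ) : ℕ :=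
  sSup {t | ∃ Λ ∈ dualSpace I ξ, Λ ≠ 0 ∧ ordD Λ = t}

/-- The maximal ideal at ξ. -/
def maxIdeal {n : ℕ} (ξ : Fin n → ℂ) : Ideal (MvPolynomial (Fin n) ℂ) :=
  Ideal.span (Set.range fun i => X i - C (ξ i))

/-- `(x-ξ)^α`. -/
def xpow {n : ℕ} (ξ : Fin n → ℂ) (α : Fin n →₀ ℕ) : MvPolynomial (Fin n) ℂ :=
  ∏ i : Fin n, (X i - C (ξ i)) ^ (α i)

/-- multi-index factorial -/
def mfact {n : ℕ} (β : Fin n →₀ ℕ) : ℕ := ∏ i : Fin n, Nat.factorial (β i)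

def mdeg {n : ℕ} (β : Fin n →₀ ℕ) : ℕ := β.sum fun _ k => k

/-!
Since the `Λⱼ` vanish on `Q` and are biorthogonal to the monomials `(x-ξ)^{αᵢ}` representing the
basis, the `j`-th coordinate of the class of any `p` is `Λⱼ(p)`. As `b₀ = 1`, the vector `M^γ e₀` is
the coordinate vector of `(x-ξ)^γ`, and `Λⱼ((x-ξ)^γ) = γ!·Λⱼ[γ]`, with `Λⱼ[γ]` the coefficient of
`∂^γ` in `Λⱼ`, because `∂^β (x-ξ)^γ` vanishes at `ξ` unless `β = γ`. Hence the `j`-th coordinate of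
`q(ξ+M)(1)` is `Σ_γ Λⱼ[γ] ∂^γq(ξ) = Λⱼ(q)`. The truncation of the sum is harmless: each `xᵢ-ξᵢ` is
nilpotent in the `δ`-dimensional algebra `ℂ[x]/Q`, so `(xᵢ-ξᵢ)^δ ∈ Q`, and `Λⱼ`, which kills `Q`,
has no term `∂^γ` with some `γᵢ ≥ δ`.
-/

lemma IsNilpotent.pow_finrank_eq_zero {K A : Type*} [Field K] [Ring A] [Algebra K A]
    [FiniteDimensional K A] {x : A} (hx : IsNilpotent x) : x ^ Module.finrank K A = 0 := by
  have hmul : Algebra.lmul K A (x ^ Module.finrank K A) = 0 := by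
    simpa only [(hx.map (Algebra.lmul K A)).charpoly_eq_X_pow_finrank, map_pow,
      Polynomial.aeval_X] using (Algebra.lmul K A x).aeval_self_charpoly
  simpa using LinearMap.congr_fun hmul 1

lemma Module.Basis.repr_mk_eq_of_biorthogonal {K A ι : Type*} [CommRing K] [CommRing A]
    [Algebra K A] [Fintype ι] [DecidableEq ι] {Q : Ideal A} (b : Basis ι K (A ⧸ Q)) {p : ι → A}
    (hb : ∀ i, b i = Ideal.Quotient.mk Q (p i)) {L : ι → A →ₗ[K] K}
    (hQ : ∀ j, ∀ a ∈ Q, L j a = 0) (hpair : ∀ j i, L j (p i) = if j = i then 1 else 0)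
    (a : A) (j : ι) : b.repr (Ideal.Quotient.mk Q a) j = L j a := by
  have hmem : a - ∑ i, b.repr (Ideal.Quotient.mk Q a) i • p i ∈ Q := by
    rw [← Ideal.Quotient.eq_zero_iff_mem, map_sub, map_sum]
    simp only [← Ideal.Quotient.mkₐ_eq_mk K, map_smul]
    simp only [Ideal.Quotient.mkₐ_eq_mk, ← hb]
    rw [b.sum_repr, sub_self]
  have h := hQ j _ hmem
  simp only [map_sub, map_sum, map_smul, hpair, smul_eq_mul, mul_ite, mul_one, mul_zero,
    Finset.sum_ite_eq, Finset.mem_univ, if_true] at h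
  exact (sub_eq_zero.mp h).symm

lemma LinearMap.toMatrix_mulLeft_mulVec_single {K R ι : Type*} [CommRing K] [CommRing R]
    [Algebra K R] [Fintype ι] [DecidableEq ι] (b : Module.Basis ι K R) {i₀ : ι} (hb : b i₀ = 1)
    (x : R) : (LinearMap.toMatrix b b (LinearMap.mulLeft K x)).mulVec (Pi.single i₀ 1) = b.repr x := by
  rw [← Finsupp.single_eq_pi_single, ← b.repr_self, LinearMap.toMatrix_mulVec_repr, hb,
    LinearMap.mulLeft_apply, mul_one]

lemma LinearMap.prod_ofFn_toMatrix_mulLeft_pow {K R ι : Type*} [CommRing K] [CommRing R]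
    [Algebra K R] [Fintype ι] [DecidableEq ι] (b : Module.Basis ι K R) {m : ℕ} (x : Fin m → R)
    (e : Fin m → ℕ) :
    (List.ofFn fun i => LinearMap.toMatrix b b (LinearMap.mulLeft K (x i)) ^ e i).prod =
      LinearMap.toMatrix b b (LinearMap.mulLeft K (∏ i, x i ^ e i)) := by
  let E : R →ₐ[K] Matrix ι ι K := (LinearMap.toMatrixAlgEquiv b).toAlgHom.comp (Algebra.lmul K R)
  have hE : ∀ y, E y = LinearMap.toMatrix b b (LinearMap.mulLeft K y) := fun y => rfl
  simp only [← hE, ← map_pow]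
  rw [← List.prod_ofFn, map_list_prod, List.map_ofFn]
  rfl

section Xpow

variable {n : ℕ} (ξ : Fin n → ℂ)

open Finset in
lemma pderiv_xpow (i : Fin n) (γ : Fin n →₀ ℕ) :
    pderiv i (xpow ξ γ) = γ i • xpow ξ (γ - Finsupp.single i 1) := by
  have split : ∀ κ : Fin n →₀ ℕ, xpow ξ κ =
      (X i - C (ξ i)) ^ κ i * ∏ j ∈ univ.erase i, (X j - C (ξ j)) ^ κ j :=
    fun κ => (mul_prod_erase _ _ (mem_univ i)).symm
  have hrest : pderiv i (∏ j ∈ univ.erase i, (X j - C (ξ j)) ^ γ j) = 0 :=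
    prod_induction _ (fun g => pderiv i g = 0) (fun f g hf hg => by simp [hf, hg]) pderiv_one
      fun j hj => by simp [pderiv_X_of_ne (ne_of_mem_erase hj)]
  have herase : ∏ j ∈ univ.erase i, (X j - C (ξ j)) ^ (γ - Finsupp.single i 1 : Fin n →₀ ℕ) j =
      ∏ j ∈ univ.erase i, (X j - C (ξ j)) ^ γ j :=
    prod_congr rfl fun j hj => by simp [Finsupp.single_eq_of_ne (ne_of_mem_erase hj)]
  rw [split, split (γ - _), pderiv_mul, hrest, herase, pderiv_pow]
  simp [nsmul_eq_mul, mul_assoc]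

lemma pderiv_pow_xpow (i : Fin n) (γ : Fin n →₀ ℕ) (k : ℕ) :
    ((pderiv i).toLinearMap ^ k) (xpow ξ γ) =
      (γ i).descFactorial k • xpow ξ (γ - Finsupp.single i k) := by
  induction k with
  | zero => simp
  | succ k ih =>
    rw [pow_succ', Module.End.mul_apply, ih, map_nsmul, Derivation.coeFn_coe,
      pderiv_xpow, smul_smul, tsub_tsub, ← Finsupp.single_add, Nat.descFactorial_succ]
    simp [mul_comm]

lemma list_prod_pderiv_pow_xpow (β γ : Fin n →₀ ℕ) (l : List (Fin n)) (hl : l.Nodup) :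
    (l.map fun i => (pderiv i).toLinearMap ^ β i).prod (xpow ξ γ) =
      (l.map fun i => (γ i).descFactorial (β i)).prod •
        xpow ξ (γ - (l.map fun i => Finsupp.single i (β i)).sum) := by
  induction l with
  | nil => simp
  | cons i t ih =>
    obtain ⟨hit, ht⟩ := List.nodup_cons.mp hl
    have hi : (t.map fun j => Finsupp.single j (β j)).sum i = 0 := by
      rw [← Finsupp.applyAddHom_apply, map_list_sum, List.map_map]
      refine List.sum_eq_zero fun x hx => ?_
      obtain ⟨j, hj, rfl⟩ := List.mem_map.mp hx
      exact Finsupp.single_eq_of_ne' (ne_of_mem_of_not_mem hj hit)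
    simp only [List.map_cons, List.prod_cons, List.sum_cons, Module.End.mul_apply, ih ht,
      map_nsmul, pderiv_pow_xpow, smul_smul, Finsupp.tsub_apply, hi, tsub_zero, tsub_tsub]
    rw [add_comm, mul_comm]

lemma pdiff_xpow (β γ : Fin n →₀ ℕ) :
    pdiff β (xpow ξ γ) = (∏ i, (γ i).descFactorial (β i)) • xpow ξ (γ - β) := by
  have hβ : ((List.finRange n).map fun i => Finsupp.single i (β i)).sum = β := by
    rw [← List.ofFn_eq_map, List.sum_ofFn, Finsupp.univ_sum_single]
  rw [pdiff, List.ofFn_eq_map, list_prod_pderiv_pow_xpow ξ β γ _ (List.nodup_finRange n), hβ,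
    ← List.ofFn_eq_map, List.prod_ofFn]

lemma mfact_ne_zero (β : Fin n →₀ ℕ) : mfact β ≠ 0 :=
  Finset.prod_ne_zero_iff.mpr fun i _ => Nat.factorial_ne_zero (β i)

lemma xpow_zero : xpow ξ 0 = 1 := by
  simp [xpow]

lemma eval_xpow (γ : Fin n →₀ ℕ) : eval ξ (xpow ξ γ) = if γ = 0 then 1 else 0 := by
  split_ifs with h
  · simp [xpow, h]
  · obtain ⟨i, hi⟩ := Finsupp.ne_iff.mp h
    rw [xpow, map_prod]
    exact Finset.prod_eq_zero (Finset.mem_univ i) (by simp [zero_pow hi])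

lemma eval_pdiff_xpow (β γ : Fin n →₀ ℕ) :
    eval ξ (pdiff β (xpow ξ γ)) = if β = γ then (mfact γ : ℂ) else 0 := by
  rw [pdiff_xpow, map_nsmul, eval_xpow]
  simp only [tsub_eq_zero_iff_le]
  split_ifs with hγβ hβγ hβγ
  · subst hβγ
    simp [mfact, Nat.descFactorial_self]
  · obtain ⟨i, hi⟩ : ∃ i, γ i < β i := by
      by_contra! h
      exact hβγ (le_antisymm h hγβ)
    rw [Finset.prod_eq_zero (f := fun i => (γ i).descFactorial (β i)) (Finset.mem_univ i)
      (Nat.descFactorial_eq_zero_iff_lt.mpr hi), zero_smul]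
  · exact absurd hβγ.ge hγβ
  · simp

lemma dapply_xpow (Λ : (Fin n →₀ ℕ) →₀ ℂ) (γ : Fin n →₀ ℕ) :
    dapply ξ Λ (xpow ξ γ) = Λ γ * mfact γ := by
  rw [dapply, Finsupp.sum_eq_single γ]
  · rw [eval_pdiff_xpow, if_pos rfl]
  · intro β _ hβ
    rw [eval_pdiff_xpow, if_neg hβ, mul_zero]
  · intro
    rw [zero_mul]

def dapplyₗ (Λ : (Fin n →₀ ℕ) →₀ ℂ) : MvPolynomial (Fin n) ℂ →ₗ[ℂ] ℂ where
  toFun := dapply ξ Λ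
  map_add' p q := by simp only [dapply, map_add, mul_add, Finsupp.sum_add]
  map_smul' c p := by
    simp only [dapply, map_smul, smul_eval, smul_eq_mul, Finsupp.mul_sum, RingHom.id_apply]
    exact Finsupp.sum_congr fun β _ => mul_left_comm _ _ _

end Xpow

section Nilpotency

variable {n : ℕ} {Q : Ideal (MvPolynomial (Fin n) ℂ)} {ξ : Fin n → ℂ}
  [FiniteDimensional ℂ (MvPolynomial (Fin n) ℂ ⧸ Q)]

lemma X_sub_C_pow_finrank_mem (hrad : maxIdeal ξ ≤ Q.radical) (i : Fin n) :
    (X i - C (ξ i)) ^ Module.finrank ℂ (MvPolynomial (Fin n) ℂ ⧸ Q) ∈ Q := by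
  obtain ⟨k, hk⟩ := hrad (Ideal.subset_span ⟨i, rfl⟩)
  rw [← Ideal.Quotient.eq_zero_iff_mem, map_pow]
  exact IsNilpotent.pow_finrank_eq_zero ⟨k, by rwa [← map_pow, Ideal.Quotient.eq_zero_iff_mem]⟩

lemma xpow_mem_of_finrank_le (hrad : maxIdeal ξ ≤ Q.radical) {γ : Fin n →₀ ℕ} {i : Fin n}
    (hi : Module.finrank ℂ (MvPolynomial (Fin n) ℂ ⧸ Q) ≤ γ i) : xpow ξ γ ∈ Q := by
  rw [xpow, ← Finset.mul_prod_erase _ _ (Finset.mem_univ i), ← Nat.sub_add_cancel hi, pow_add]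
  exact Q.mul_mem_right _ (Q.mul_mem_left _ (X_sub_C_pow_finrank_mem hrad i))

lemma dual_apply_eq_zero_of_finrank_le (hrad : maxIdeal ξ ≤ Q.radical) {Λ : (Fin n →₀ ℕ) →₀ ℂ}
    (hΛ : ∀ p ∈ Q, dapply ξ Λ p = 0) {γ : Fin n →₀ ℕ} {i : Fin n}
    (hi : Module.finrank ℂ (MvPolynomial (Fin n) ℂ ⧸ Q) ≤ γ i) : Λ γ = 0 := by
  have h := hΛ _ (xpow_mem_of_finrank_le hrad hi)
  rw [dapply_xpow] at h
  exact (mul_eq_zero.mp h).resolve_right (Nat.cast_ne_zero.mpr (mfact_ne_zero γ))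

end Nilpotency

lemma dual_support_subset_Iic {n δ : ℕ} {Q : Ideal (MvPolynomial (Fin n) ℂ)} {ξ : Fin n → ℂ}
    (b : Module.Basis (Fin δ) ℂ (MvPolynomial (Fin n) ℂ ⧸ Q)) (hrad : maxIdeal ξ ≤ Q.radical)
    {Λ : (Fin n →₀ ℕ) →₀ ℂ} (hΛ : ∀ p ∈ Q, dapply ξ Λ p = 0) :
    Λ.support ⊆ Finset.Iic (Finsupp.equivFunOnFinite.symm fun _ => δ) := by
  have := b.finiteDimensional_of_finite
  intro γ hγ
  rw [Finset.mem_Iic]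
  intro i
  by_contra! h
  refine Finsupp.mem_support_iff.mp hγ (dual_apply_eq_zero_of_finrank_le hrad hΛ (i := i) ?_)
  rw [Module.finrank_eq_card_basis b, Fintype.card_fin]
  exact h.le

theorem normal_form_via_matrices_general {n δ : ℕ} (hδ : 0 < δ)
    (Q : Ideal (MvPolynomial (Fin n) ℂ)) (ξ : Fin n → ℂ)
    (hrad : Q.radical = maxIdeal ξ)
    (α : Fin δ → (Fin n →₀ ℕ)) (Λ : Fin δ → ((Fin n →₀ ℕ) →₀ ℂ))
    (b : Module.Basis (Fin δ) ℂ (MvPolynomial (Fin n) ℂ ⧸ Q))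
    (hb : ∀ i, b i = Ideal.Quotient.mk Q (xpow ξ (α i)))
    (h0 : α ⟨0, hδ⟩ = 0)
    (hdual : ∀ i, ∀ p ∈ Q, dapply ξ (Λ i) p = 0)
    (hpair : ∀ i j, dapply ξ (Λ i) (xpow ξ (α j)) = if i = j then 1 else 0)
    (q : MvPolynomial (Fin n) ℂ) :
    -- the multiplication matrices Mᵢ
    let M : Fin n → Matrix (Fin δ) (Fin δ) ℂ := fun i =>
      LinearMap.toMatrix b b
        (LinearMap.mulLeft ℂ (Ideal.Quotient.mk Q (X i - C (ξ i))))
    -- M^γ (the Mᵢ commute; the product is taken in the order of the indices)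
    let Mpow : (Fin n →₀ ℕ) → Matrix (Fin δ) (Fin δ) ℂ := fun γ =>
      (List.ofFn fun i : Fin n => (M i) ^ (γ i)).prod
    -- the coordinate vector q(ξ+M)[1] = Σ_γ (1/γ!)∂^γq(ξ)·M^γ[1]
    let v : Fin δ → ℂ := fun j =>
      ∑ γ ∈ Finset.Iic (Finsupp.equivFunOnFinite.symm fun _ : Fin n => δ),
        (mfact γ : ℂ)⁻¹ * eval ξ (pdiff γ q) *
          (Mpow γ).mulVec (Pi.single ⟨0, hδ⟩ 1) j
    -- N(q) = q(ξ+M)(1)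
    Ideal.Quotient.mk Q q = ∑ j, v j • b j ∧
    -- q(ξ+M)(1) = Σᵢ Λᵢ(q)(x−ξ)^{αᵢ}, i.e. the coordinates are the Λⱼ(q)
    (∀ j, v j = dapply ξ (Λ j) q) := by
  intro M Mpow v
  have coord : ∀ p j, b.repr (Ideal.Quotient.mk Q p) j = dapply ξ (Λ j) p :=
    b.repr_mk_eq_of_biorthogonal hb (L := fun j => dapplyₗ ξ (Λ j)) hdual hpair
  have hb₀ : b ⟨0, hδ⟩ = 1 := by rw [hb, h0, xpow_zero, map_one]
  have column : ∀ γ, (Mpow γ).mulVec (Pi.single ⟨0, hδ⟩ 1) =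
      b.repr (Ideal.Quotient.mk Q (xpow ξ γ)) := fun γ => by
    simp only [Mpow, M, LinearMap.prod_ofFn_toMatrix_mulLeft_pow,
      LinearMap.toMatrix_mulLeft_mulVec_single b hb₀, xpow, map_prod, map_pow]
  have hv : ∀ j, v j = dapply ξ (Λ j) q := fun j => by
    simp only [v, column, coord, dapply_xpow]
    rw [dapply, Finsupp.sum, ← Finset.sum_subset (dual_support_subset_Iic b hrad.ge (hdual j))]
    · refine Finset.sum_congr rfl fun γ _ => ?_
      field_simp [mfact_ne_zero γ]
    · intro γ _ hγ
      simp [Finsupp.notMem_support_iff.mp hγ]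
  refine ⟨?_, hv⟩
  conv_lhs => rw [← b.sum_repr (Ideal.Quotient.mk Q q)]
  simp only [coord, hv]

/-- the normal form via multiplication matrices.  For every
`q ∈ ℂ[x]`, `N(q) = q(ξ+M)(1) = Σ_γ (1/γ!)∂^γq(ξ)·M^γ[1]` (the sum is finite
by nilpotency of the commuting matrices `M`, so it is truncated at coordinate
bound δ), and the coordinate vector `q(ξ+M)[1]` equals `(Λ₀(q),…,Λ_{δ−1}(q))`:
`N(q) = Σᵢ Λᵢ(q)·(x−ξ)^{αᵢ}`. -/
theorem normal_form_via_matrices {n δ : ℕ} (hδ : 0 < δ)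
    (Q : Ideal (MvPolynomial (Fin n) ℂ)) (ξ : Fin n → ℂ)
    (hprim : Q.IsPrimary) (hrad : Q.radical = maxIdeal ξ)
    (α : Fin δ → (Fin n →₀ ℕ)) (Λ : Fin δ → ((Fin n →₀ ℕ) →₀ ℂ))
    (b : Module.Basis (Fin δ) ℂ (MvPolynomial (Fin n) ℂ ⧸ Q))
    (hb : ∀ i, b i = Ideal.Quotient.mk Q (xpow ξ (α i)))
    (h0 : α ⟨0, hδ⟩ = 0)
    (hdual : ∀ i, ∀ p ∈ Q, dapply ξ (Λ i) p = 0)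
    (hlead : ∀ i, (Λ i) (α i) = (mfact (α i) : ℂ)⁻¹)
    (hsupp : ∀ i β, β ∈ (Λ i).support →
      mdeg β ≤ mdeg (α i) ∧ (β = α i ∨ β ∉ Set.range α))
    (hpair : ∀ i j, dapply ξ (Λ i) (xpow ξ (α j)) = if i = j then 1 else 0)
    (hord : ∀ i j, i ≤ j → mdeg (α i) ≤ mdeg (α j))
    (q : MvPolynomial (Fin n) ℂ) :
    -- the multiplication matrices Mᵢ
    let M : Fin n → Matrix (Fin δ) (Fin δ) ℂ := fun i =>
      LinearMap.toMatrix b b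
        (LinearMap.mulLeft ℂ (Ideal.Quotient.mk Q (X i - C (ξ i))))
    -- M^γ (the Mᵢ commute; the product is taken in the order of the indices)
    let Mpow : (Fin n →₀ ℕ) → Matrix (Fin δ) (Fin δ) ℂ := fun γ =>
      (List.ofFn fun i : Fin n => (M i) ^ (γ i)).prod
    -- the coordinate vector q(ξ+M)[1] = Σ_γ (1/γ!)∂^γq(ξ)·M^γ[1]
    let v : Fin δ → ℂ := fun j =>
      ∑ γ ∈ Finset.Iic (Finsupp.equivFunOnFinite.symm fun _ : Fin n => δ),
        (mfact γ : ℂ)⁻¹ * eval ξ (pdiff γ q) *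
          (Mpow γ).mulVec (Pi.single ⟨0, hδ⟩ 1) j
    -- N(q) = q(ξ+M)(1)
    Ideal.Quotient.mk Q q = ∑ j, v j • b j ∧
    -- q(ξ+M)(1) = Σᵢ Λᵢ(q)(x−ξ)^{αᵢ}, i.e. the coordinates are the Λⱼ(q)
    (∀ j, v j = dapply ξ (Λ j) q) :=
  normal_form_via_matrices_general hδ Q ξ hrad α Λ b hb h0 hdual hpair q

end
end

section
/- Consider the commuting nilpotent matrices Mᵢ(ν) obtained by specializing the parametric multiplication matrices of an exponent set E (stable under subtraction, connected to 1) at a solution ν of the commutation relations. Define Λᵢ = Σ_{γ∈ℕⁿ} [M(ν)^γ]_{i,1}(1/γ!)∂_ξ^γ for i = 0,…,δ−1. Then the span D of Λ₀,…,Λ_{δ−1} is stable under the derivations d/d∂_{j,ξ}, with d/d∂_{j,ξ}(Λᵢ) = Σ_{k<i} [Mⱼ(ν)]_{i,k}Λ_k. -/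
open MvPolynomial

noncomputable section

/-- Pairs `(j, β)` indexing the free parameters `μ_{α_j,β}` of the parametric
multiplication matrices: `β = α_k + e_i` lies outside `E` and `|α_k| < |α_j|`. -/
def UsedPair {n δ : ℕ} (α : Fin δ → (Fin n →₀ ℕ))
    (p : Fin δ × (Fin n →₀ ℕ)) : Prop :=
  ∃ (k : Fin δ) (i : Fin n), p.2 = α k + Finsupp.single i 1 ∧
    (∀ l, α l ≠ p.2) ∧ mdeg (α k) < mdeg (α p.1)

open Classical in
/-- The parametric multiplication matrix `Mᵢ(μ)` associated to the exponent
set `E = {α₀,…,α_{δ−1}}`: entry `(j,k)` is `1` if `α_j = α_k + e_i`, `0` if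
`α_k + e_i ∈ E` with `α_j ≠ α_k + e_i`, the fresh variable `μ_{α_j, α_k+e_i}`
if `|α_k| < |α_j|`, and `0` otherwise (strict triangular structure). -/
noncomputable def pmm {n δ : ℕ} (α : Fin δ → (Fin n →₀ ℕ)) (K : Type)
    [CommSemiring K] (i : Fin n) :
    Matrix (Fin δ) (Fin δ) (MvPolynomial (Subtype (UsedPair α)) K) :=
  Matrix.of fun j k =>
    if α j = α k + Finsupp.single i 1 then 1
    else if h2 : ∃ l, α l = α k + Finsupp.single i 1 then 0
    else if h3 : mdeg (α k) < mdeg (α j) then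
      MvPolynomial.X ⟨(j, α k + Finsupp.single i 1),
        k, i, rfl, fun l hl => h2 ⟨l, hl⟩, h3⟩
    else 0

/-- The parametric multiplication matrix viewed in `K[z,μ]`
(`z`-variables in the left summand, `μ`-variables in the right summand). -/
noncomputable def pmmT {n δ : ℕ} (α : Fin δ → (Fin n →₀ ℕ)) (K : Type)
    [CommSemiring K] (i : Fin n) :
    Matrix (Fin δ) (Fin δ)
      (MvPolynomial ((Fin n) ⊕ (Subtype (UsedPair α))) K) :=
  (pmm α K i).map (rename Sum.inr)

/-- `M(μ)^γ = M₁(μ)^{γ₁}⋯Mₙ(μ)^{γₙ}` in the fixed order of the indices. -/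
noncomputable def pmmPowT {n δ : ℕ} (α : Fin δ → (Fin n →₀ ℕ)) (K : Type)
    [CommSemiring K] (γ : Fin n →₀ ℕ) :
    Matrix (Fin δ) (Fin δ)
      (MvPolynomial ((Fin n) ⊕ (Subtype (UsedPair α))) K) :=
  (List.ofFn fun i : Fin n => (pmmT α K i) ^ (γ i)).prod

/-- The parametric normal form `N_{z,μ}(p) = Σ_γ (1/γ!)∂^γ(p)·M(μ)^γ[1]`,
an element of `K[z,μ]^δ`; the sum is finite since `M(μ)^γ = 0` for `|γ| ≥ δ`,
so it is truncated at coordinatewise bound δ. -/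
noncomputable def pnf {n δ : ℕ} [NeZero δ] (α : Fin δ → (Fin n →₀ ℕ))
    (K : Type) [Field K] (p : MvPolynomial (Fin n) K) :
    Fin δ → MvPolynomial ((Fin n) ⊕ (Subtype (UsedPair α))) K := fun j =>
  ∑ γ ∈ Finset.Iic (Finsupp.equivFunOnFinite.symm fun _ : Fin n => δ),
    (mfact γ : K)⁻¹ •
      (rename Sum.inl (pdiff γ p) *
        (pmmPowT α K γ).mulVec (Pi.single 0 1) j)

/-- The commutator ideal `C`, generated by the entries of
`Mᵢ(μ)Mⱼ(μ) − Mⱼ(μ)Mᵢ(μ)`. -/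
noncomputable def commIdeal {n δ : ℕ} (α : Fin δ → (Fin n →₀ ℕ)) (K : Type)
    [CommRing K] :
    Ideal (MvPolynomial ((Fin n) ⊕ (Subtype (UsedPair α))) K) :=
  Ideal.span {t | ∃ (i i' : Fin n) (j k : Fin δ),
    t = (pmmT α K i * pmmT α K i' - pmmT α K i' * pmmT α K i) j k}

/-- formal derivative `d/d∂_j` acting on polynomial differential operators. -/
noncomputable def dder {n : ℕ} (j : Fin n) (L : (Fin n →₀ ℕ) →₀ ℂ) :
    (Fin n →₀ ℕ) →₀ ℂ :=
  L.sum fun β c => Finsupp.single (β - Finsupp.single j 1) (c * (β j))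

/-!
Since the `Mₗ` are nilpotent, the truncation in the definition of `Λᵢ` is harmless and `Λᵢ` has
coefficient `[M^β]_{i,0} / β!` at every `β`. The derivation `d/d∂_j` shifts coefficients,
`(d/d∂_j Λ)_β = (β_j + 1) Λ_{β+e_j}`, and commutativity gives `M^{β+e_j} = M_j M^β`; the factor
`β_j + 1` cancels against `(β + e_j)!`, leaving `Σ_k [M_j]_{i,k} [M^β]_{k,0} / β!`. Each `M_j` is
strictly lower triangular because `E` is listed by increasing degree, which cuts the sum to `k < i`;
stability of the span then follows from linearity of `d/d∂_j`.
-/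

lemma mdeg_eq_degree {n : ℕ} (β : Fin n →₀ ℕ) : mdeg β = β.degree := rfl

lemma pmm_apply_eq_zero_of_mdeg_le {n δ : ℕ} {α : Fin δ → (Fin n →₀ ℕ)} {K : Type}
    [CommSemiring K] (i : Fin n) {j k : Fin δ} (h : mdeg (α j) ≤ mdeg (α k)) :
    pmm α K i j k = 0 := by
  have hne : α j ≠ α k + Finsupp.single i 1 := fun heq => by
    have := congrArg Finsupp.degree heq
    simp only [map_add, Finsupp.degree_single, ← mdeg_eq_degree] at this
    omega
  simp [pmm, hne, h.not_gt]

lemma Matrix.pow_apply_eq_zero_of_lt_add {R : Type*} [Semiring R] {δ : ℕ}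
    {A : Matrix (Fin δ) (Fin δ) R} (hA : ∀ i k, i ≤ k → A i k = 0) :
    ∀ (m : ℕ) {i k : Fin δ}, (i : ℕ) < m + k → (A ^ m) i k = 0
  | 0, i, k, hik => Matrix.one_apply_ne (by rintro rfl; omega)
  | m + 1, i, k, hik => by
    rw [pow_succ', Matrix.mul_apply]
    refine Finset.sum_eq_zero fun l _ => ?_
    rcases le_or_gt i l with hil | hli
    · rw [hA i l hil, zero_mul]
    · rw [Matrix.pow_apply_eq_zero_of_lt_add hA m (by omega), mul_zero]

lemma Matrix.pow_card_eq_zero_of_apply_eq_zero_of_le {R : Type*} [Semiring R] {δ : ℕ}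
    {A : Matrix (Fin δ) (Fin δ) R} (hA : ∀ i k, i ≤ k → A i k = 0) : A ^ δ = 0 := by
  ext i k
  exact Matrix.pow_apply_eq_zero_of_lt_add hA δ (by omega)

def multiPow {n : ℕ} {R : Type*} [Monoid R] (M : Fin n → R) (γ : Fin n →₀ ℕ) : R :=
  (List.ofFn fun l => M l ^ γ l).prod

open IsMulCommutative in
lemma multiPow_add_single {n : ℕ} {R : Type*} [Monoid R] {M : Fin n → R}
    (hM : ∀ i j, M i * M j = M j * M i) (γ : Fin n →₀ ℕ) (j : Fin n) :
    multiPow M (γ + Finsupp.single j 1) = M j * multiPow M γ := by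
  -- rearrange the product inside the commutative submonoid generated by the `M l`
  have := Submonoid.isMulCommutative_closure R (s := Set.range M) (by
    rintro _ ⟨a, rfl⟩ _ ⟨b, rfl⟩; exact hM a b)
  let N : Fin n → Submonoid.closure (Set.range M) :=
    fun l => ⟨M l, Submonoid.subset_closure ⟨l, rfl⟩⟩
  have hcoe : ∀ γ : Fin n →₀ ℕ, multiPow M γ = ↑(∏ l, N l ^ γ l) := fun γ => by
    rw [← List.prod_ofFn, Submonoid.coe_list_prod, List.map_ofFn]
    rfl
  rw [hcoe, hcoe, show M j = (N j : R) from rfl, ← Submonoid.coe_mul]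
  congr 1
  simp only [Finsupp.coe_add, Pi.add_apply, pow_add, Finset.prod_mul_distrib, Finsupp.single_apply,
    pow_ite, pow_one, pow_zero, Finset.prod_ite_eq, Finset.mem_univ, if_true, mul_comm]

lemma multiPow_eq_zero {n : ℕ} {R : Type*} [MonoidWithZero R] {M : Fin n → R}
    {γ : Fin n →₀ ℕ} (l : Fin n) (h : M l ^ γ l = 0) : multiPow M γ = 0 :=
  List.prod_eq_zero (List.mem_ofFn.mpr ⟨l, h⟩)

lemma mfact_add_single {n : ℕ} (γ : Fin n →₀ ℕ) (j : Fin n) :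
    mfact (γ + Finsupp.single j 1) = (γ j + 1) * mfact γ := by
  rw [mfact, mfact, Fintype.prod_eq_mul_prod_compl j,
    Fintype.prod_eq_mul_prod_compl j (f := fun i => (γ i).factorial), ← mul_assoc]
  congr 1
  · simp [Nat.factorial_succ]
  · refine Finset.prod_congr rfl fun i hi => ?_
    have hij : j ≠ i := fun h => by simp [h] at hi
    simp [hij]

lemma dder_eq_linearCombination {n : ℕ} (j : Fin n) :
    dder j = Finsupp.linearCombination ℂ
      (fun β : Fin n →₀ ℕ => Finsupp.single (β - Finsupp.single j 1) (β j : ℂ)) := by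
  ext1 L
  simp only [dder, Finsupp.linearCombination_apply, Finsupp.smul_single, smul_eq_mul]

lemma dder_apply {n : ℕ} (j : Fin n) (L : (Fin n →₀ ℕ) →₀ ℂ) (β : Fin n →₀ ℕ) :
    dder j L β = L (β + Finsupp.single j 1) * (β j + 1) := by
  classical
  rw [dder, Finsupp.sum_apply, Finsupp.sum, Finset.sum_eq_single (β + Finsupp.single j 1)]
  · simp
  · intro γ _ hγ
    rw [Finsupp.single_apply, ite_eq_right_iff]
    rintro rfl
    rcases Nat.eq_zero_or_pos (γ j) with h | h
    · simp [h]
    · exact absurd (tsub_add_cancel_of_le (Finsupp.single_le_iff.mpr h)).symm hγ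
  · intro h
    simp [Finsupp.notMem_support_iff.mp h]

/-- The paper's `Λᵢ`, with the sum over `γ` truncated to the box `γ ≤ (δ,…,δ)`. -/
def dualFunctional {n δ : ℕ} [NeZero δ] (M : Fin n → Matrix (Fin δ) (Fin δ) ℂ) (i : Fin δ) :
    (Fin n →₀ ℕ) →₀ ℂ :=
  ∑ γ ∈ Finset.Iic (Finsupp.equivFunOnFinite.symm fun _ : Fin n => δ),
    Finsupp.single γ (multiPow M γ i 0 * (mfact γ : ℂ)⁻¹)

section dualFunctional

variable {n δ : ℕ} [NeZero δ] {M : Fin n → Matrix (Fin δ) (Fin δ) ℂ}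

lemma dualFunctional_apply (hnil : ∀ l, M l ^ δ = 0) (i : Fin δ) (β : Fin n →₀ ℕ) :
    dualFunctional M i β = multiPow M β i 0 * (mfact β : ℂ)⁻¹ := by
  classical
  rw [dualFunctional, Finsupp.finsetSum_apply]
  simp only [Finsupp.single_apply, Finset.sum_ite_eq', Finset.mem_Iic, ite_eq_left_iff]
  intro hβ
  obtain ⟨l, hl⟩ : ∃ l, δ < β l := by
    by_contra! h
    exact hβ fun l => h l
  rw [multiPow_eq_zero l (pow_eq_zero_of_le hl.le (hnil l)), Matrix.zero_apply, zero_mul]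

lemma dder_dualFunctional (hcomm : ∀ i j, M i * M j = M j * M i) (hnil : ∀ l, M l ^ δ = 0)
    (j : Fin n) (i : Fin δ) :
    dder j (dualFunctional M i) = ∑ k, M j i k • dualFunctional M k := by
  ext β
  simp only [dder_apply, Finsupp.finsetSum_apply, Finsupp.smul_apply, smul_eq_mul,
    dualFunctional_apply hnil, multiPow_add_single hcomm, mfact_add_single, Matrix.mul_apply]
  have hβj : (β j + 1 : ℂ) ≠ 0 := Nat.cast_add_one_ne_zero _
  rw [Nat.cast_mul, Nat.cast_add_one, mul_inv, Finset.sum_mul, Finset.sum_mul]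
  refine Finset.sum_congr rfl fun k _ => ?_
  field_simp

end dualFunctional

theorem dual_functionals_derivation_stable_general {n δ : ℕ} [NeZero δ]
    (α : Fin δ → (Fin n →₀ ℕ))
    (hord : ∀ i j : Fin δ, i ≤ j → mdeg (α i) ≤ mdeg (α j))
    (ν : Subtype (UsedPair α) → ℂ)
    -- the specialized multiplication matrices ...
    (Mν : Fin n → Matrix (Fin δ) (Fin δ) ℂ)
    (hMν : ∀ i, Mν i = (pmm α ℂ i).map (aeval ν))
    -- ... are pairwise commuting
    (hcomm : ∀ i j, Mν i * Mν j = Mν j * Mν i) :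
    -- Λᵢ = Σ_γ [M(ν)^γ]_{i,1}(1/γ!)∂_ξ^γ
    let Λν : Fin δ → ((Fin n →₀ ℕ) →₀ ℂ) := fun i =>
      ∑ γ ∈ Finset.Iic (Finsupp.equivFunOnFinite.symm fun _ : Fin n => δ),
        Finsupp.single γ
          (((List.ofFn fun l : Fin n => (Mν l) ^ (γ l)).prod i 0) *
            (mfact γ : ℂ)⁻¹)
    -- d/d∂_j Λᵢ = Σ_{k<i} [Mⱼ(ν)]_{i,k} Λ_k
    (∀ (j : Fin n) (i : Fin δ),
      dder j (Λν i) = ∑ k ∈ Finset.Iio i, (Mν j) i k • Λν k) ∧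
    -- stability of the span under the derivations
    (∀ (j : Fin n), ∀ L ∈ Submodule.span ℂ (Set.range Λν),
      dder j L ∈ Submodule.span ℂ (Set.range Λν)) := by
  intro Λν
  have hlower : ∀ l (i k : Fin δ), i ≤ k → Mν l i k = 0 := fun l i k hik => by
    rw [hMν, Matrix.map_apply, pmm_apply_eq_zero_of_mdeg_le l (hord i k hik), map_zero]
  have hnil : ∀ l, Mν l ^ δ = 0 := fun l =>
    Matrix.pow_card_eq_zero_of_apply_eq_zero_of_le (hlower l)
  have hder : ∀ j i, dder j (Λν i) = ∑ k ∈ Finset.Iio i, Mν j i k • Λν k := fun j i => by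
    rw [show Λν = dualFunctional Mν from rfl, dder_dualFunctional hcomm hnil]
    refine (Finset.sum_subset (Finset.subset_univ _) fun k _ hk => ?_).symm
    rw [hlower j i k (not_lt.mp (by simpa using hk)), zero_smul]
  refine ⟨hder, fun j L hL => ?_⟩
  rw [dder_eq_linearCombination]
  refine (Submodule.map_span_le _ _ _).mpr ?_ (Submodule.mem_map_of_mem hL)
  rintro _ ⟨i, rfl⟩
  rw [← dder_eq_linearCombination, hder]
  exact Submodule.sum_mem _ fun k _ => Submodule.smul_mem _ _ (Submodule.subset_span ⟨k, rfl⟩)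

/-- for commuting nilpotent matrices `Mᵢ(ν)` obtained by
specializing the parametric multiplication matrices at a solution ν of the
commutation relations, the functionals `Λᵢ = Σ_γ [M(ν)^γ]_{i,1}(1/γ!)∂_ξ^γ`
span a space stable under the derivations `d/d∂_{j,ξ}`, with
`d/d∂_{j,ξ}(Λᵢ) = Σ_{k<i} [Mⱼ(ν)]_{i,k} Λ_k`. -/
theorem dual_functionals_derivation_stable {n δ : ℕ} [NeZero δ]
    (α : Fin δ → (Fin n →₀ ℕ))
    (h0 : α 0 = 0)
    (hinj : Function.Injective α)
    (hstab : ∀ (k : Fin δ) (β : Fin n →₀ ℕ), β ≤ α k → ∃ l, α l = β)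
    (hconn : ∀ j, α j ≠ 0 → ∃ (k : Fin δ) (i : Fin n),
      α j = α k + Finsupp.single i 1)
    (hord : ∀ i j : Fin δ, i ≤ j → mdeg (α i) ≤ mdeg (α j))
    (ξ : Fin n → ℂ) (ν : Subtype (UsedPair α) → ℂ)
    -- the specialized multiplication matrices ...
    (Mν : Fin n → Matrix (Fin δ) (Fin δ) ℂ)
    (hMν : ∀ i, Mν i = (pmm α ℂ i).map (aeval ν))
    -- ... are pairwise commuting
    (hcomm : ∀ i j, Mν i * Mν j = Mν j * Mν i) :
    -- Λᵢ = Σ_γ [M(ν)^γ]_{i,1}(1/γ!)∂_ξ^γ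
    let Λν : Fin δ → ((Fin n →₀ ℕ) →₀ ℂ) := fun i =>
      ∑ γ ∈ Finset.Iic (Finsupp.equivFunOnFinite.symm fun _ : Fin n => δ),
        Finsupp.single γ
          (((List.ofFn fun l : Fin n => (Mν l) ^ (γ l)).prod i 0) *
            (mfact γ : ℂ)⁻¹)
    -- d/d∂_j Λᵢ = Σ_{k<i} [Mⱼ(ν)]_{i,k} Λ_k
    (∀ (j : Fin n) (i : Fin δ),
      dder j (Λν i) = ∑ k ∈ Finset.Iio i, (Mν j) i k • Λν k) ∧
    -- stability of the span under the derivations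
    (∀ (j : Fin n), ∀ L ∈ Submodule.span ℂ (Set.range Λν),
      dder j L ∈ Submodule.span ℂ (Set.range Λν)) :=
  dual_functionals_derivation_stable_general α hord ν Mν hMν hcomm
end
end
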